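/- arXiv:1802.10117 — 2 statements merged into one kernel-verified Lean document; each statement's English description precedes it below -/
import Mathlib

section
/- In the no-C-market regime, the price P_B(θ) = φ(π + (1-π)(1-θ)) / ((2-θ(1-π))(φπ + (1-π)(1-θ))) is strictly increasing in θ on (0, θ₀]. -/
/-!
With `s = (1 - π)(1 - θ)` one has `2 - θ(1 - π) = 1 + π + s`, so the price is
`φ(π + s) / ((1 + π + s)(φπ + s))` composed with the decreasing map `θ ↦ s`. This rational
function of `s` is strictly decreasing for `s > 0`: cross-multiplying, the difference of its
values at `v < u` is `φ(u - v)` times a sum of nonnegative terms containing `uv > 0`. It remains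
to see that `θ ≤ θ₀ < 1` keeps `s` positive.
-/

noncomputable def theta0 (π φ : ℝ) : ℝ :=
  (1 - Real.sqrt (1 - 4*(1-π)*π*(1-φ))) / (2*(1-π))

theorem strictAntiOn_price {π φ : ℝ} (hπ : 0 ≤ π) (hφ₀ : 0 < φ) (hφ₁ : φ ≤ 1) :
    StrictAntiOn (fun s : ℝ => φ * (π + s) / ((1 + π + s) * (φ * π + s))) (Set.Ioi 0) := by
  intro v (hv : 0 < v) u (hu : 0 < u) hvu
  have hden : ∀ s : ℝ, 0 < s → 0 < (1 + π + s) * (φ * π + s) := fun s hs => by positivity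
  rw [div_lt_div_iff₀ (hden u hu) (hden v hv)]
  have hgap : 0 < π * (1 + π) * (1 - φ) + φ * π ^ 2 + π * (u + v) + u * v := by
    have : 0 ≤ π * (1 + π) * (1 - φ) := mul_nonneg (by positivity) (sub_nonneg.2 hφ₁)
    positivity
  linear_combination mul_pos (mul_pos hφ₀ (sub_pos.2 hvu)) hgap

theorem theta0_lt_one {π φ : ℝ} (hπ : π ∈ Set.Ioo 0 1) (hφ : 0 < φ) : theta0 π φ < 1 := by
  obtain ⟨hπ₀, hπ₁⟩ := hπ
  have hdisc : 1 - 4*(1-π)*π*(1-φ) = (2*π - 1) ^ 2 + 4 * (π * (1 - π) * φ) := by ring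
  have hsqrt : 2*π - 1 < Real.sqrt (1 - 4*(1-π)*π*(1-φ)) := calc
    2*π - 1 ≤ |2*π - 1| := le_abs_self _
    _ = Real.sqrt ((2*π - 1) ^ 2) := (Real.sqrt_sq_eq_abs _).symm
    _ < Real.sqrt (1 - 4*(1-π)*π*(1-φ)) := by
      rw [hdisc]
      have : 0 < π * (1 - π) * φ := mul_pos (mul_pos hπ₀ (sub_pos.2 hπ₁)) hφ
      exact Real.sqrt_lt_sqrt (sq_nonneg _) (by linarith)
  rw [theta0, div_lt_one (by linarith)]
  linarith

theorem PB_strict_mono_noC_general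
    (π φ : ℝ) (hπ : π ∈ Set.Ioo (0:ℝ) 1) (hφ : φ ∈ Set.Ioo (0:ℝ) 1) :
    StrictMonoOn
      (fun θ : ℝ =>
        φ * (π + (1-π)*(1-θ)) / ((2 - θ*(1-π)) * (φ*π + (1-π)*(1-θ))))
      (Set.Ioc (0:ℝ) (theta0 π φ)) := by
  have hπ₁ : 0 < 1 - π := sub_pos.2 hπ.2
  have hs : StrictAnti fun θ : ℝ => (1 - π) * (1 - θ) := fun a b hab => by nlinarith
  have hmaps : Set.MapsTo (fun θ : ℝ => (1 - π) * (1 - θ)) (Set.Ioc 0 (theta0 π φ)) (Set.Ioi 0) :=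
    fun θ hθ => mul_pos hπ₁ (sub_pos.2 (hθ.2.trans_lt (theta0_lt_one hπ hφ.1)))
  convert (strictAntiOn_price hπ.1.le hφ.1 hφ.2.le).comp (hs.strictAntiOn _) hmaps using 1
  funext θ
  simp only [Function.comp_apply]
  ring

theorem PB_strict_mono_noC
    (π φ : ℝ) (hπ : π ∈ Set.Ioo (0:ℝ) 1) (hφ : φ ∈ Set.Ioo (0:ℝ) 1)
    (hdisc : π * (1 - π) * (1 - φ) < 1/4) :
    StrictMonoOn
      (fun θ : ℝ =>
        φ * (π + (1-π)*(1-θ)) / ((2 - θ*(1-π)) * (φ*π + (1-π)*(1-θ))))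
      (Set.Ioc (0:ℝ) (theta0 π φ)) :=
  PB_strict_mono_noC_general π φ hπ hφ
end

section
/- Define Q(s) = ((π+s)/(1+π+s))² · φ/(φπ + s) for s = (1-π)(1-θ). If θ ≤ θ₀, where θ₀ is the smaller root of θ²(1-π)-θ+π(1-φ)=0, then dQ/dθ > 0. -/
/-! The sign of `dQ/dθ` is that of `(π+s)(1+π+s) - 2(φπ+s)` because `ds/dθ = -(1-π) < 0`;
with `s = (1-π)(1-θ)` this expression equals `(1-π) g(θ) + π(1-φ)(1+π)` for
`g(θ) = (1-π)θ² - θ + π(1-φ)`, and `g(θ) ≥ 0` to the left of its smaller root `θ₀`.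
Since `g(1) = -πφ < 0`, also `θ₀ < 1`, so `s > 0` and every denominator is positive. -/

-- Also true when there are no real roots: `√` of the negative discriminant is then `0`.
lemma quadratic_nonneg_of_le_smaller_root {A B C x : ℝ} (hA : 0 < A)
    (hx : 2 * A * x ≤ -B - Real.sqrt (B ^ 2 - 4 * A * C)) :
    0 ≤ A * x ^ 2 + B * x + C := by
  have hdisc : B ^ 2 - 4 * A * C ≤ (2 * A * x + B) ^ 2 :=
    calc B ^ 2 - 4 * A * C ≤ Real.sqrt (B ^ 2 - 4 * A * C) ^ 2 := by
          rw [Real.sq_sqrt']; exact le_max_left _ _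
      _ ≤ (-(2 * A * x + B)) ^ 2 :=
          pow_le_pow_left₀ (Real.sqrt_nonneg _) (by linarith) 2
      _ = (2 * A * x + B) ^ 2 := neg_sq _
  nlinarith

namespace NoC

/-- `Q = P_B K_B` in the no-C-market equilibrium, as a function of `s = (1-π)(1-θ)`. -/
noncomputable def Q (π φ s : ℝ) : ℝ :=
  ((π + s) / (1 + π + s)) ^ 2 * (φ / (φ * π + s))

lemma hasDerivAt_Q {π φ s : ℝ} (hb : 1 + π + s ≠ 0) (hc : φ * π + s ≠ 0) :
    HasDerivAt (Q π φ)
      (φ * (π + s) * (2 * (φ * π + s) - (π + s) * (1 + π + s)) /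
        ((1 + π + s) ^ 3 * (φ * π + s) ^ 2)) s := by
  have hP : HasDerivAt (fun t => (π + t) / (1 + π + t)) (1 / (1 + π + s) ^ 2) s := by
    refine (((hasDerivAt_id s).const_add π).div ((hasDerivAt_id s).const_add (1 + π)) hb
      ).congr_deriv ?_
    simp only [id]
    ring
  have hK : HasDerivAt (fun t => φ / (φ * π + t)) (-φ / (φ * π + s) ^ 2) s := by
    refine ((hasDerivAt_const s φ).div ((hasDerivAt_id s).const_add (φ * π)) hc).congr_deriv ?_
    simp only [id]
    ring
  refine ((hP.fun_pow 2).mul hK).congr_deriv ?_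
  simp only [Nat.cast_ofNat, Nat.add_one_sub_one, pow_one]
  field_simp
  ring

lemma quadratic_nonneg_and_le_vertex_of_le_theta0 {π φ θ : ℝ} (hπ : π < 1)
    (hθ : θ ≤ theta0 π φ) :
    0 ≤ (1 - π) * θ ^ 2 - θ + π * (1 - φ) ∧ 2 * (1 - π) * θ ≤ 1 := by
  have h1π : 0 < 1 - π := by linarith
  have hθ' : 2 * (1 - π) * θ ≤ 1 - Real.sqrt (1 - 4 * (1 - π) * π * (1 - φ)) := by
    rwa [theta0, le_div_iff₀ (by positivity), mul_comm] at hθ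
  have hdiscr :
      (-1 : ℝ) ^ 2 - 4 * (1 - π) * (π * (1 - φ)) = 1 - 4 * (1 - π) * π * (1 - φ) := by ring
  refine ⟨?_, hθ'.trans (sub_le_self _ (Real.sqrt_nonneg _))⟩
  have := quadratic_nonneg_of_le_smaller_root h1π (B := -1) (C := π * (1 - φ)) (x := θ)
    (by rw [hdiscr]; linarith)
  linarith

lemma lt_one_of_le_theta0 {π φ θ : ℝ} (hπ : π ∈ Set.Ioo (0 : ℝ) 1) (hφ : 0 < φ)
    (hθ : θ ≤ theta0 π φ) : θ < 1 := by
  obtain ⟨hg, hvertex⟩ := quadratic_nonneg_and_le_vertex_of_le_theta0 hπ.2 hθ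
  by_contra! h1
  -- `g` decreases up to its vertex `1 / (2(1-π)) ≥ θ ≥ 1`, so `g θ ≤ g 1 = -πφ < 0`.
  have hdecr : (1 - π) * (θ + 1) ≤ 1 := by nlinarith [hπ.2]
  nlinarith [mul_pos hπ.1 hφ]

lemma two_mul_sub_mul_neg_of_le_theta0 {π φ θ : ℝ} (hπ : π ∈ Set.Ioo (0 : ℝ) 1)
    (hφ : φ < 1) (hθ : θ ≤ theta0 π φ) :
    2 * (φ * π + (1 - π) * (1 - θ))
      - (π + (1 - π) * (1 - θ)) * (1 + π + (1 - π) * (1 - θ)) < 0 := by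
  have hg := (quadratic_nonneg_and_le_vertex_of_le_theta0 hπ.2 hθ).1
  have hpos : 0 < π * (1 - φ) * (1 + π) := by
    have := hπ.1; have : 0 < 1 - φ := by linarith
    positivity
  have hident : (π + (1 - π) * (1 - θ)) * (1 + π + (1 - π) * (1 - θ))
      - 2 * (φ * π + (1 - π) * (1 - θ))
      = (1 - π) * ((1 - π) * θ ^ 2 - θ + π * (1 - φ)) + π * (1 - φ) * (1 + π) := by ring
  linarith [mul_nonneg (sub_nonneg.2 hπ.2.le) hg]

end NoC

theorem Q_deriv_pos_noC_general
    (π φ : ℝ) (hπ : π ∈ Set.Ioo (0:ℝ) 1) (hφ : φ ∈ Set.Ioo (0:ℝ) 1)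
    (θ : ℝ) (hθ : θ ≤ theta0 π φ) :
    0 < deriv (fun θ : ℝ =>
        ((π + (1-π)*(1-θ)) / (1 + π + (1-π)*(1-θ)))^2 *
          (φ / (φ*π + (1-π)*(1-θ)))) θ := by
  change 0 < deriv (NoC.Q π φ ∘ fun t => (1 - π) * (1 - t)) θ
  have hkey := NoC.two_mul_sub_mul_neg_of_le_theta0 hπ hφ.2 hθ
  set s := (1 - π) * (1 - θ)
  have hθ1 := NoC.lt_one_of_le_theta0 hπ hφ.1 hθ
  have hs : 0 < s := mul_pos (by linarith [hπ.2]) (by linarith)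
  have ha : 0 < π + s := by linarith [hπ.1]
  have hb : 0 < 1 + π + s := by linarith
  have hc : 0 < φ * π + s := by linarith [mul_pos hφ.1 hπ.1]
  have hsθ : HasDerivAt (fun t : ℝ => (1 - π) * (1 - t)) (-(1 - π)) θ := by
    simpa using ((hasDerivAt_id θ).const_sub 1).const_mul (1 - π)
  have hQ := (NoC.hasDerivAt_Q hb.ne' hc.ne').comp θ hsθ
  rw [hQ.deriv]
  refine mul_pos_of_neg_of_neg (div_neg_of_neg_of_pos ?_ (by positivity)) (by linarith [hπ.2])
  exact mul_neg_of_pos_of_neg (mul_pos hφ.1 ha) hkey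

theorem Q_deriv_pos_noC
    (π φ : ℝ) (hπ : π ∈ Set.Ioo (0:ℝ) 1) (hφ : φ ∈ Set.Ioo (0:ℝ) 1)
    (hdisc : π * (1 - π) * (1 - φ) < 1/4)
    (θ : ℝ) (hθ0 : 0 < θ) (hθ : θ ≤ theta0 π φ) :
    0 < deriv (fun θ : ℝ =>
        ((π + (1-π)*(1-θ)) / (1 + π + (1-π)*(1-θ)))^2 *
          (φ / (φ*π + (1-π)*(1-θ)))) θ :=
  Q_deriv_pos_noC_general π φ hπ hφ θ hθ
end
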